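/- Let α ∈ (1,2), q_α(θ) = |θ|^α and r_α(θ) = (2 − 2cos θ)^{α/2} = |2 sin(θ/2)|^α on [−π,π]. Then 1 ≤ q_α(θ)/r_α(θ) ≤ π²/4 for all θ ∈ [−π,π] \ {0}, and consequently for every n and every nonzero vector z ∈ ℝⁿ, 1 < zᵀ T_n(q_α) z / (zᵀ T_n(r_α) z) < π²/4. -/

import Mathlib

/-!
On `[0, π]` one has `2 - 2 cos θ = (2 sin(θ/2))²`, so `r_α(θ) = (2 sin(θ/2))^α`, and the two bounds
`2 sin(θ/2) < θ ≤ (π/2) · 2 sin(θ/2)` (the second is Jordan's inequality) give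
`r_α < q_α < (π/2)^α r_α < (π²/4) r_α` away from `θ = 0`.

For the matrices, `zᵀ T_n(h) z = (1/2π) ∫ h(θ) |∑ₖ zₖ e^{ikθ}|² dθ`. For `z ≠ 0` the weight
`|p(e^{iθ})|²`, with `p` the nonzero polynomial of coefficients `z`, vanishes at only finitely many
angles, so the quadratic form of `T_n(h)` is positive as soon as `h > 0` off `θ = 0`. Applying
this to `r_α`, `q_α - r_α` and `(π²/4) r_α - q_α`, and using linearity of `h ↦ T_n(h)`, gives the
strict Rayleigh-quotient bounds.
-/

open MeasureTheory Matrix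

/-- For an even function `h`, its `m`-th Fourier coefficient
`ĥ_m = (1/2π)∫_{−π}^{π} h(θ)cos(mθ)dθ` (real form). -/
noncomputable def fcCos (h : ℝ → ℝ) (m : ℤ) : ℝ :=
  (1 / (2 * Real.pi)) * ∫ θ in (-Real.pi)..Real.pi, h θ * Real.cos (m * θ)

/-- The `n×n` real symmetric Toeplitz matrix generated by an even function `h`. -/
noncomputable def ToepE (n : ℕ) (h : ℝ → ℝ) : Matrix (Fin n) (Fin n) ℝ :=
  Matrix.of fun i j => fcCos h ((i : ℤ) - (j : ℤ))

open Real Set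

lemma two_sub_two_cos_eq_sq (θ : ℝ) : 2 - 2 * cos θ = (2 * sin (θ / 2)) ^ 2 := by
  have h : cos θ = 2 * cos (θ / 2) ^ 2 - 1 := by rw [← cos_two_mul]; ring_nf
  linear_combination -2 * h - 4 * sin_sq_add_cos_sq (θ / 2)

lemma two_sub_two_cos_rpow_half {θ : ℝ} (α : ℝ) (h0 : 0 ≤ θ) (hπ : θ ≤ π) :
    (2 - 2 * cos θ) ^ (α / 2) = (2 * sin (θ / 2)) ^ α := by
  have hs : 0 ≤ 2 * sin (θ / 2) := by
    have := sin_nonneg_of_nonneg_of_le_pi (x := θ / 2) (by linarith) (by linarith [pi_pos])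
    linarith
  rw [two_sub_two_cos_eq_sq, ← rpow_natCast, ← rpow_mul hs]
  norm_num
  ring_nf

lemma two_sub_two_cos_rpow_pos (α : ℝ) {θ : ℝ} (hθ : θ ∈ Icc (-π) π) (h0 : θ ≠ 0) :
    0 < (2 - 2 * cos θ) ^ (α / 2) := by
  have hcos : cos θ ≠ 1 := fun h =>
    h0 ((cos_eq_one_iff_of_lt_of_lt (by linarith [hθ.1, pi_pos]) (by linarith [hθ.2, pi_pos])).1 h)
  exact rpow_pos_of_pos (by linarith [(cos_le_one θ).lt_of_ne hcos]) _

lemma two_sub_two_cos_rpow_lt_abs_rpow {α θ : ℝ} (hα : 0 < α) (hθ : θ ∈ Icc (-π) π)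
    (h0 : θ ≠ 0) : (2 - 2 * cos θ) ^ (α / 2) < |θ| ^ α := by
  have hθ' := abs_pos.2 h0
  rw [← cos_abs, two_sub_two_cos_rpow_half α hθ'.le (abs_le.2 hθ)]
  have hs : 0 ≤ 2 * sin (|θ| / 2) := by
    have := sin_nonneg_of_nonneg_of_le_pi (x := |θ| / 2) (by linarith) (by linarith [abs_le.2 hθ])
    linarith
  have := sin_lt (x := |θ| / 2) (by linarith)
  exact rpow_lt_rpow hs (by linarith) hα

lemma abs_rpow_lt_pi_sq_div_four_mul {α θ : ℝ} (hα₀ : 0 ≤ α) (hα₂ : α < 2)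
    (hθ : θ ∈ Icc (-π) π) (h0 : θ ≠ 0) :
    |θ| ^ α < π ^ 2 / 4 * (2 - 2 * cos θ) ^ (α / 2) := by
  have hθ' := abs_pos.2 h0
  have hθπ : |θ| ≤ π := abs_le.2 hθ
  rw [← cos_abs, two_sub_two_cos_rpow_half α hθ'.le hθπ]
  have hs : 0 < 2 * sin (|θ| / 2) := by
    have := sin_pos_of_pos_of_lt_pi (x := |θ| / 2) (by linarith) (by linarith [pi_pos])
    linarith
  have hjordan : |θ| ≤ π / 2 * (2 * sin (|θ| / 2)) := by
    have := mul_le_sin (x := |θ| / 2) (by linarith) (by linarith)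
    rw [div_mul_eq_mul_div, div_le_iff₀ pi_pos] at this
    linarith
  calc |θ| ^ α ≤ (π / 2 * (2 * sin (|θ| / 2))) ^ α := rpow_le_rpow hθ'.le hjordan hα₀
    _ = (π / 2) ^ α * (2 * sin (|θ| / 2)) ^ α := mul_rpow (by positivity) hs.le
    _ < (π / 2) ^ (2 : ℝ) * (2 * sin (|θ| / 2)) ^ α :=
      mul_lt_mul_of_pos_right (rpow_lt_rpow_of_exponent_lt (by linarith [pi_gt_three]) hα₂)
        (rpow_pos_of_pos hs _)
    _ = π ^ 2 / 4 * (2 * sin (|θ| / 2)) ^ α := by rw [rpow_two]; ring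

lemma intervalIntegral_pos_of_pos_on_diff_countable {f : ℝ → ℝ} {a b : ℝ} {S : Set ℝ}
    (hfi : IntervalIntegrable f volume a b) (hS : S.Countable)
    (hpos : ∀ x ∈ Ioo a b \ S, 0 < f x) (hab : a < b) : 0 < ∫ x in a..b, f x := by
  have hS0 : volume S = 0 := hS.measure_zero _
  have h₀ : 0 ≤ᵐ[volume.restrict (uIoc a b)] f := by
    rw [Filter.EventuallyLE, uIoc_of_le hab.le]
    refine ae_restrict_of_ae_eq_of_ae_restrict Ioo_ae_eq_Ioc ?_
    rw [ae_restrict_iff' measurableSet_Ioo]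
    filter_upwards [measure_eq_zero_iff_ae_notMem.1 hS0] with x hxS hx using (hpos x ⟨hx, hxS⟩).le
  rw [intervalIntegral.integral_pos_iff_support_of_nonneg_ae' h₀ hfi]
  refine ⟨hab, ?_⟩
  calc 0 < volume (Ioo a b) := (Measure.measure_Ioo_pos _).mpr hab
    _ = volume (Ioo a b \ S) := (measure_sdiff_null hS0).symm
    _ ≤ volume (Function.support f ∩ Ioc a b) :=
      measure_mono fun x hx => ⟨(hpos x hx).ne', Ioo_subset_Ioc_self hx.1⟩

lemma toepE_sub {n : ℕ} {h₁ h₂ : ℝ → ℝ} (hh₁ : IntervalIntegrable h₁ volume (-π) π)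
    (hh₂ : IntervalIntegrable h₂ volume (-π) π) :
    ToepE n (fun θ => h₁ θ - h₂ θ) = ToepE n h₁ - ToepE n h₂ := by
  ext i j
  simp only [ToepE, fcCos, of_apply, Matrix.sub_apply, sub_mul]
  rw [intervalIntegral.integral_sub (hh₁.mul_continuousOn (by fun_prop))
    (hh₂.mul_continuousOn (by fun_prop)), mul_sub]

lemma toepE_const_mul (n : ℕ) (c : ℝ) (h : ℝ → ℝ) :
    ToepE n (fun θ => c * h θ) = c • ToepE n h := by
  ext i j
  simp only [ToepE, fcCos, of_apply, Matrix.smul_apply, smul_eq_mul, mul_assoc,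
    intervalIntegral.integral_const_mul]
  ring

/-- `|∑ₖ zₖ e^{ikθ}|²`, in real form. -/
noncomputable def trigWeight {n : ℕ} (z : Fin n → ℝ) (θ : ℝ) : ℝ :=
  (∑ i, z i * cos (i * θ)) ^ 2 + (∑ i, z i * sin (i * θ)) ^ 2

lemma continuous_trigWeight {n : ℕ} (z : Fin n → ℝ) : Continuous (trigWeight z) := by
  unfold trigWeight
  fun_prop

lemma trigWeight_nonneg {n : ℕ} (z : Fin n → ℝ) (θ : ℝ) : 0 ≤ trigWeight z θ := by
  unfold trigWeight
  positivity

lemma sum_sum_mul_cos_sub {n : ℕ} (z : Fin n → ℝ) (θ : ℝ) :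
    ∑ i, ∑ j, z i * z j * cos ((((i : ℤ) - (j : ℤ) : ℤ) : ℝ) * θ) = trigWeight z θ := by
  simp only [trigWeight, sq, Finset.sum_mul_sum, ← Finset.sum_add_distrib]
  refine Finset.sum_congr rfl fun i _ => Finset.sum_congr rfl fun j _ => ?_
  rw [show (((i : ℤ) - (j : ℤ) : ℤ) : ℝ) * θ = i * θ - j * θ by push_cast; ring, cos_sub]
  ring

lemma dotProduct_toepE_mulVec {n : ℕ} {h : ℝ → ℝ} (hh : IntervalIntegrable h volume (-π) π)
    (z : Fin n → ℝ) :
    z ⬝ᵥ ToepE n h *ᵥ z = 1 / (2 * π) * ∫ θ in (-π)..π, h θ * trigWeight z θ := by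
  have hint : ∀ i j : Fin n, IntervalIntegrable
      (fun θ => z i * z j * (h θ * cos ((((i : ℤ) - (j : ℤ) : ℤ) : ℝ) * θ))) volume (-π) π :=
    fun i j => (hh.mul_continuousOn (by fun_prop)).const_mul _
  calc z ⬝ᵥ ToepE n h *ᵥ z = ∑ i, ∑ j, z i * z j * fcCos h ((i : ℤ) - (j : ℤ)) := by
        simp only [dotProduct, mulVec, ToepE, of_apply, Finset.mul_sum]
        exact Finset.sum_congr rfl fun i _ => Finset.sum_congr rfl fun j _ => by ring
    _ = 1 / (2 * π) * ∑ i, ∑ j, ∫ θ in (-π)..π,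
          z i * z j * (h θ * cos ((((i : ℤ) - (j : ℤ) : ℤ) : ℝ) * θ)) := by
        simp only [fcCos, Finset.mul_sum, intervalIntegral.integral_const_mul]
        exact Finset.sum_congr rfl fun i _ => Finset.sum_congr rfl fun j _ => by ring
    _ = 1 / (2 * π) * ∫ θ in (-π)..π, h θ * trigWeight z θ := by
        simp only [← intervalIntegral.integral_finsetSum fun j _ => hint _ j]
        rw [← intervalIntegral.integral_finsetSum fun i _ => ?_]
        · congr 1
          refine intervalIntegral.integral_congr fun θ _ => ?_
          simp only [← sum_sum_mul_cos_sub, Finset.mul_sum]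
          exact Finset.sum_congr rfl fun i _ => Finset.sum_congr rfl fun j _ => by ring
        · simpa only [Finset.sum_fn] using IntervalIntegrable.sum Finset.univ fun j _ => hint i j

lemma trigWeight_eq_normSq_eval {n : ℕ} (z : Fin n → ℝ) (θ : ℝ) :
    trigWeight z θ =
      Complex.normSq ((Polynomial.ofFn n fun i => (z i : ℂ)).eval ↑(Circle.exp θ)) := by
  have heval : (Polynomial.ofFn n fun i => (z i : ℂ)).eval ↑(Circle.exp θ) =
      ((∑ i, z i * cos (i * θ) : ℝ) : ℂ) + ((∑ i, z i * sin (i * θ) : ℝ) : ℂ) * Complex.I := by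
    simp only [Polynomial.ofFn_eq_sum_monomial, Polynomial.eval_finsetSum,
      Polynomial.eval_monomial, Circle.coe_exp, ← Complex.exp_nat_mul, Complex.ofReal_sum,
      Finset.sum_mul, ← Finset.sum_add_distrib]
    refine Finset.sum_congr rfl fun i _ => ?_
    rw [← mul_assoc, ← Complex.ofReal_natCast, ← Complex.ofReal_mul, Complex.exp_mul_I]
    push_cast
    ring
  rw [heval, Complex.normSq_add_mul_I, trigWeight]

lemma finite_setOf_trigWeight_eq_zero {n : ℕ} {z : Fin n → ℝ} (hz : z ≠ 0) :
    {θ | θ ∈ Ioc (-π) π ∧ trigWeight z θ = 0}.Finite := by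
  set p := Polynomial.ofFn n fun i => (z i : ℂ)
  have hp : p ≠ 0 := by
    rw [Ne, ← Polynomial.ofFn_zero n]
    refine (Polynomial.injective_ofFn n).ne fun h => hz (funext fun i => ?_)
    simpa using congrFun h i
  have hinj : InjOn (fun θ : ℝ => (Circle.exp θ : ℂ)) (Ioc (-π) π) :=
    Subtype.val_injective.comp_injOn (Circle.exp_injOn_Ioc (by linarith))
  refine Finite.of_finite_image ((Polynomial.finite_setOfPred_isRoot hp).subset ?_)
    (hinj.mono fun θ hθ => hθ.1)
  rintro _ ⟨θ, ⟨-, hθ⟩, rfl⟩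
  rwa [trigWeight_eq_normSq_eval, Complex.normSq_eq_zero] at hθ

lemma dotProduct_toepE_mulVec_pos {n : ℕ} {h : ℝ → ℝ} (hh : IntervalIntegrable h volume (-π) π)
    (hpos : ∀ θ ∈ Ioo (-π) π, θ ≠ 0 → 0 < h θ) {z : Fin n → ℝ} (hz : z ≠ 0) :
    0 < z ⬝ᵥ ToepE n h *ᵥ z := by
  rw [dotProduct_toepE_mulVec hh]
  refine mul_pos (by positivity) (intervalIntegral_pos_of_pos_on_diff_countable
    (hh.mul_continuousOn (continuous_trigWeight z).continuousOn)
    ((finite_setOf_trigWeight_eq_zero hz).countable.insert 0) ?_ (by linarith [pi_pos]))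
  rintro θ ⟨hθ, hθS⟩
  rw [mem_insert_iff, not_or] at hθS
  exact mul_pos (hpos θ hθ hθS.1) ((trigWeight_nonneg z θ).lt_of_ne fun h0 =>
    hθS.2 ⟨Ioo_subset_Ioc_self hθ, h0.symm⟩)

/-- With `q_α(θ) = |θ|^α` and `r_α(θ) = (2 − 2cos θ)^{α/2}` for `α ∈ (1,2)`:
`1 ≤ q_α/r_α ≤ π²/4` on `[−π,π] \ {0}`, and consequently for every `n` and every
nonzero `z ∈ ℝⁿ`, `1 < zᵀT_n(q_α)z / zᵀT_n(r_α)z < π²/4`. -/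
theorem stmt16 (α : ℝ) (hα : α ∈ Set.Ioo (1 : ℝ) 2) :
    (∀ θ ∈ Set.Icc (-Real.pi) Real.pi, θ ≠ 0 →
        1 ≤ |θ| ^ α / (2 - 2 * Real.cos θ) ^ (α / 2) ∧
          |θ| ^ α / (2 - 2 * Real.cos θ) ^ (α / 2) ≤ Real.pi ^ 2 / 4) ∧
      ∀ n : ℕ, ∀ z : Fin n → ℝ, z ≠ 0 →
        1 < (z ⬝ᵥ (ToepE n fun θ => |θ| ^ α).mulVec z) /
              (z ⬝ᵥ (ToepE n fun θ => (2 - 2 * Real.cos θ) ^ (α / 2)).mulVec z) ∧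
          (z ⬝ᵥ (ToepE n fun θ => |θ| ^ α).mulVec z) /
              (z ⬝ᵥ (ToepE n fun θ => (2 - 2 * Real.cos θ) ^ (α / 2)).mulVec z) <
            Real.pi ^ 2 / 4 := by
  obtain ⟨hα₁, hα₂⟩ := hα
  have hα₀ : 0 < α := by linarith
  refine ⟨fun θ hθ h0 => ?_, fun n z hz => ?_⟩
  · have hr := two_sub_two_cos_rpow_pos α hθ h0
    exact ⟨(one_le_div hr).2 (two_sub_two_cos_rpow_lt_abs_rpow hα₀ hθ h0).le,
      (div_le_iff₀ hr).2 (abs_rpow_lt_pi_sq_div_four_mul hα₀.le hα₂ hθ h0).le⟩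
  have hq : IntervalIntegrable (fun θ : ℝ => |θ| ^ α) volume (-π) π :=
    (continuous_abs.rpow_const fun _ => Or.inr hα₀.le).intervalIntegrable _ _
  have hr : IntervalIntegrable (fun θ => (2 - 2 * cos θ) ^ (α / 2)) volume (-π) π :=
    ((by fun_prop : Continuous fun θ => 2 - 2 * cos θ).rpow_const
      fun _ => Or.inr (by positivity)).intervalIntegrable _ _
  have hR := dotProduct_toepE_mulVec_pos hr
    (fun θ hθ h0 => two_sub_two_cos_rpow_pos α (Ioo_subset_Icc_self hθ) h0) hz
  have hlower := dotProduct_toepE_mulVec_pos (hq.sub hr) (fun θ hθ h0 =>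
    sub_pos.2 (two_sub_two_cos_rpow_lt_abs_rpow hα₀ (Ioo_subset_Icc_self hθ) h0)) hz
  have hupper := dotProduct_toepE_mulVec_pos ((hr.const_mul (π ^ 2 / 4)).sub hq) (fun θ hθ h0 =>
    sub_pos.2 (abs_rpow_lt_pi_sq_div_four_mul hα₀.le hα₂ (Ioo_subset_Icc_self hθ) h0)) hz
  rw [toepE_sub hq hr, sub_mulVec, dotProduct_sub, sub_pos] at hlower
  rw [toepE_sub (hr.const_mul _) hq, toepE_const_mul, sub_mulVec, dotProduct_sub, smul_mulVec,
    dotProduct_smul, smul_eq_mul, sub_pos] at hupper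
  exact ⟨(one_lt_div hR).2 hlower, (div_lt_iff₀ hR).2 hupper⟩
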